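/- If k > d ≥ 1, then the set of global minimizers { W ∈ M(k,d) : L(W) = 0 } is a path-connected subset of the space of k×d real matrices. -/

import Mathlib

open MeasureTheory ProbabilityTheory

/-- The ReLU function. -/
noncomputable def relu (z : ℝ) : ℝ := max z 0

/-- The standard Gaussian probability measure on `ℝ^d`. -/
noncomputable def stdGaussian (d : ℕ) : Measure (Fin d → ℝ) :=
  Measure.pi fun _ => gaussianReal 0 1

/-- Euclidean inner product on `ℝ^d`. -/
noncomputable def dot {d : ℕ} (w v : Fin d → ℝ) : ℝ := ∑ j, w j * v j

/-- The loss with target `V` the `k × d` matrix whose first `d` rows are the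
standard basis vectors and whose remaining rows are zero. -/
noncomputable def loss (k d : ℕ) (W : Fin k → Fin d → ℝ) : ℝ :=
  (1 / 2) * ∫ x, ((∑ i, relu (dot (W i) x)) - ∑ j, relu (x j)) ^ 2 ∂(stdGaussian d)

section Aux
open Real

instance (d : ℕ) : IsProbabilityMeasure (stdGaussian d) := by
  unfold _root_.stdGaussian; infer_instance

instance : (gaussianReal 0 1).IsOpenPosMeasure :=
  (gaussianReal_absolutelyContinuous' 0 one_ne_zero).isOpenPosMeasure

instance (d : ℕ) : (stdGaussian d).IsOpenPosMeasure := by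
  unfold _root_.stdGaussian; infer_instance

lemma measurePreserving_coord (d : ℕ) (j : Fin d) :
    MeasurePreserving (fun x : Fin d → ℝ => x j) (stdGaussian d) (gaussianReal 0 1) := by
  refine ⟨measurable_pi_apply j, ?_⟩
  ext s hs
  rw [Measure.map_apply (measurable_pi_apply j) hs]
  have : (fun x : Fin d → ℝ => x j) ⁻¹' s = Set.pi Set.univ (Function.update (fun _ => Set.univ) j s) := by
    rw [Set.eval_preimage]
  rw [this, _root_.stdGaussian, Measure.pi_pi]
  rw [Finset.prod_eq_single j]
  · simp
  · intro b _ hb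
    simp [Function.update_of_ne hb]
  · simp

lemma integrable_sq_gaussian : Integrable (fun y : ℝ => y ^ 2) (gaussianReal 0 1) := by
  rw [gaussianReal_of_var_ne_zero 0 one_ne_zero]
  rw [integrable_withDensity_iff (measurable_gaussianPDF 0 1)
    (Filter.Eventually.of_forall fun x => ENNReal.ofReal_lt_top)]
  have hto : ∀ x : ℝ, (gaussianPDF 0 1 x).toReal = gaussianPDFReal 0 1 x := fun x =>
    ENNReal.toReal_ofReal (gaussianPDFReal_nonneg 0 1 x)
  simp_rw [hto, gaussianPDFReal]
  have h := integrable_rpow_mul_exp_neg_mul_sq (b := 1/2) (by norm_num) (s := ((2:ℕ):ℝ)) (by norm_num)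
  have h2 : Integrable (fun x : ℝ => x ^ (2:ℕ) * Real.exp (-(1/2) * x ^ 2)) volume := by
    apply h.congr
    filter_upwards with x
    rw [Real.rpow_natCast]
  have h3 := h2.const_mul ((Real.sqrt (2 * π * ((1:NNReal):ℝ)))⁻¹)
  apply h3.congr
  filter_upwards with x
  rw [sub_zero]
  push_cast
  ring_nf

instance (d : ℕ) : IsProbabilityMeasure (stdGaussian d) := by
  unfold _root_.stdGaussian; infer_instance

lemma continuous_relu : Continuous relu := continuous_id.max continuous_const

lemma continuous_dot {d : ℕ} (w : Fin d → ℝ) : Continuous (fun x : Fin d → ℝ => dot w x) := by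
  unfold dot
  exact continuous_finset_sum _ fun j _ => continuous_const.mul (continuous_apply j)

lemma abs_relu_le (z : ℝ) : ‖relu z‖ ≤ ‖z‖ := by
  simp only [relu, Real.norm_eq_abs]
  rcases le_or_gt z 0 with h | h
  · rw [max_eq_right h]; simp [abs_nonneg]
  · rw [max_eq_left h.le]

lemma memLp_coord (d : ℕ) (j : Fin d) : MemLp (fun x : Fin d → ℝ => x j) 2 (stdGaussian d) := by
  have h1 : MemLp (id : ℝ → ℝ) 2 (gaussianReal 0 1) := by
    rw [memLp_two_iff_integrable_sq aestronglyMeasurable_id]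
    exact integrable_sq_gaussian
  exact h1.comp_measurePreserving (measurePreserving_coord d j)

lemma memLp_dot {d : ℕ} (w : Fin d → ℝ) : MemLp (fun x : Fin d → ℝ => dot w x) 2 (stdGaussian d) := by
  unfold dot
  exact memLp_finset_sum _ fun j _ => (memLp_coord d j).const_mul (w j)

lemma memLp_relu_dot {d : ℕ} (w : Fin d → ℝ) :
    MemLp (fun x : Fin d → ℝ => relu (dot w x)) 2 (stdGaussian d) :=
  (memLp_dot w).of_le ((continuous_relu.comp (continuous_dot w)).aestronglyMeasurable)
    (Filter.Eventually.of_forall fun x => abs_relu_le _)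

lemma memLp_g {k d : ℕ} (W : Fin k → Fin d → ℝ) :
    MemLp (fun x => (∑ i, relu (dot (W i) x)) - ∑ j, relu (x j)) 2 (stdGaussian d) := by
  apply MemLp.sub
  · exact memLp_finset_sum _ fun i _ => memLp_relu_dot (W i)
  · apply memLp_finset_sum _ fun j _ => ?_
    exact (memLp_coord d j).of_le
      ((continuous_relu.comp (continuous_apply j)).aestronglyMeasurable)
      (Filter.Eventually.of_forall fun x => abs_relu_le _)

lemma integrable_g_sq {k d : ℕ} (W : Fin k → Fin d → ℝ) :
    Integrable (fun x => ((∑ i, relu (dot (W i) x)) - ∑ j, relu (x j)) ^ 2) (stdGaussian d) :=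
  (memLp_g W).integrable_sq

lemma loss_eq_zero_iff {k d : ℕ} (W : Fin k → Fin d → ℝ) :
    loss k d W = 0 ↔ ∀ x, (∑ i, relu (dot (W i) x)) = ∑ j, relu (x j) := by
  constructor
  · intro h
    have h2 : ∫ x, ((∑ i, relu (dot (W i) x)) - ∑ j, relu (x j)) ^ 2 ∂(stdGaussian d) = 0 := by
      unfold loss at h; linarith
    have h3 := (integral_eq_zero_iff_of_nonneg (fun x => sq_nonneg _) (integrable_g_sq W)).mp h2
    have hgc : Continuous fun x : Fin d → ℝ =>
        (∑ i, relu (dot (W i) x)) - ∑ j, relu (x j) := by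
      apply Continuous.sub
      · exact continuous_finset_sum _ fun i _ => continuous_relu.comp (continuous_dot (W i))
      · exact continuous_finset_sum _ fun j _ => continuous_relu.comp (continuous_apply j)
    have h4 : (fun x : Fin d → ℝ => (∑ i, relu (dot (W i) x)) - ∑ j, relu (x j))
        =ᵐ[stdGaussian d] (fun _ => 0) := by
      filter_upwards [h3] with x hx
      have : ((∑ i, relu (dot (W i) x)) - ∑ j, relu (x j)) ^ 2 = 0 := hx
      exact pow_eq_zero_iff two_ne_zero |>.mp this
    have h5 := (Continuous.ae_eq_iff_eq (stdGaussian d) hgc continuous_const).mp h4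
    intro x
    have := congrFun h5 x
    linarith [this]
  · intro h
    unfold loss
    have : ∀ x : Fin d → ℝ, ((∑ i, relu (dot (W i) x)) - ∑ j, relu (x j)) ^ 2 = 0 := by
      intro x; rw [h x, sub_self]; ring
    simp_rw [this, integral_zero, mul_zero]

def Good (k d : ℕ) (W : Fin k → Fin d → ℝ) : Prop :=
  (∀ i j, 0 ≤ W i j) ∧ (∀ i j j', W i j ≠ 0 → W i j' ≠ 0 → j = j') ∧
    (∀ j, ∑ i, W i j = 1)

lemma relu_add_relu_neg (z : ℝ) : relu z + relu (-z) = |z| := by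
  rcases le_or_gt 0 z with h | h
  · simp [relu, max_eq_left h, max_eq_right (neg_nonpos.mpr h), abs_of_nonneg h]
  · simp [relu, max_eq_right h.le, max_eq_left (neg_nonneg.mpr h.le), abs_of_neg h]

lemma relu_const_mul (c z : ℝ) (hc : 0 ≤ c) : relu (c * z) = c * relu z := by
  unfold relu
  rw [mul_max_of_nonneg _ _ hc, mul_zero]

lemma dot_neg {d : ℕ} (w x : Fin d → ℝ) : dot w (-x) = -dot w x := by
  unfold dot; simp [mul_neg, Finset.sum_neg_distrib]

lemma dot_add_smul {d : ℕ} (w x v : Fin d → ℝ) (ε : ℝ) :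
    dot w (x + ε • v) = dot w x + ε * dot w v := by
  unfold dot
  rw [Finset.mul_sum, ← Finset.sum_add_distrib]
  congr 1; funext j
  simp [Pi.add_apply, Pi.smul_apply, smul_eq_mul]; ring

lemma dot_sub_smul {d : ℕ} (w x v : Fin d → ℝ) (ε : ℝ) :
    dot w (x - ε • v) = dot w x - ε * dot w v := by
  unfold dot
  rw [Finset.mul_sum, ← Finset.sum_sub_distrib]
  congr 1; funext j
  simp [Pi.sub_apply, Pi.smul_apply, smul_eq_mul]; ring

lemma dot_single {d : ℕ} (w : Fin d → ℝ) (j : Fin d) (c : ℝ) :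
    dot w (fun j' => if j' = j then c else 0) = w j * c := by
  unfold dot
  rw [Finset.sum_eq_single j]
  · simp
  · intro b _ hb; simp [hb]
  · simp

lemma abs_pair_eq (p q : ℝ) (h : |q| ≤ |p|) : |p + q| + |p - q| = 2 * |p| := by
  rw [abs_le] at h
  rcases le_or_gt 0 p with hp | hp
  · rw [abs_of_nonneg hp] at h
    rw [abs_of_nonneg (by linarith), abs_of_nonneg (by linarith), abs_of_nonneg hp]; ring
  · rw [abs_of_neg hp] at h
    rw [abs_of_nonpos (by linarith), abs_of_nonpos (by linarith), abs_of_neg hp]; ring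

lemma abs_pair_ge (p q : ℝ) : 2 * |p| ≤ |p + q| + |p - q| := by
  have := abs_add_le (p + q) (p - q)
  have h2 : (p + q) + (p - q) = 2 * p := by ring
  rw [h2] at this
  calc 2 * |p| = |2 * p| := by rw [abs_mul]; norm_num
    _ ≤ _ := this

section PointwiseToGood

variable {k d : ℕ} {W : Fin k → Fin d → ℝ}
  (h : ∀ x, (∑ i, relu (dot (W i) x)) = ∑ j, relu (x j))
include h

lemma sum_relu_col (j : Fin d) : ∑ i, relu (W i j) = 1 := by
  have := h (fun j' => if j' = j then 1 else 0)
  simp only [dot_single] at this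
  rw [Finset.sum_eq_single j (fun b _ hb => by simp [relu, hb]) (by simp)] at this
  simp only [mul_one] at this
  rw [this]
  simp [relu]

lemma entries_nonneg (i : Fin k) (j : Fin d) : 0 ≤ W i j := by
  have := h (fun j' => if j' = j then -1 else 0)
  simp only [dot_single] at this
  rw [Finset.sum_eq_single j (fun b _ hb => by simp [relu, hb]) (by simp)] at this
  rw [if_pos rfl] at this
  have hrhs : relu (-1 : ℝ) = 0 := by simp [relu]
  rw [hrhs] at this
  have hterm : relu (W i j * (-1)) = 0 := by
    have hnn : ∀ i' : Fin k, 0 ≤ relu (W i' j * (-1)) := fun i' => le_max_right _ _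
    have := (Finset.sum_eq_zero_iff_of_nonneg (fun i' _ => hnn i')).mp this i (Finset.mem_univ i)
    exact this
  by_contra hneg
  push_neg at hneg
  have : relu (W i j * (-1)) = -W i j := by
    rw [mul_neg_one]; exact max_eq_left (by linarith)
  rw [this] at hterm
  linarith

lemma col_sum_one (j : Fin d) : ∑ i, W i j = 1 := by
  have h1 := sum_relu_col h j
  rw [← h1]
  apply Finset.sum_congr rfl
  intro i _
  exact (max_eq_left (entries_nonneg h i j)).symm

lemma abs_identity (x : Fin d → ℝ) : ∑ i, |dot (W i) x| = ∑ j, |x j| := by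
  have h1 := h x
  have h2 := h (-x)
  simp only [dot_neg] at h2
  simp only [Pi.neg_apply] at h2
  calc ∑ i, |dot (W i) x| = ∑ i, (relu (dot (W i) x) + relu (-dot (W i) x)) :=
        Finset.sum_congr rfl fun i _ => (relu_add_relu_neg _).symm
    _ = (∑ i, relu (dot (W i) x)) + ∑ i, relu (-dot (W i) x) := Finset.sum_add_distrib
    _ = (∑ j, relu (x j)) + ∑ j, relu (-(x j)) := by rw [h1, h2]
    _ = ∑ j, (relu (x j) + relu (-(x j))) := Finset.sum_add_distrib.symm
    _ = ∑ j, |x j| := Finset.sum_congr rfl fun j _ => relu_add_relu_neg _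

lemma single_support (i₀ : Fin k) (a b : Fin d) (ha : W i₀ a ≠ 0) (hb : W i₀ b ≠ 0) : a = b := by
  by_contra hab
  set w := W i₀ with hw
  set x : Fin d → ℝ := fun j => if j = a then w b else if j = b then -(w a) else 0 with hx
  set v : Fin d → ℝ := fun j => if j = a then w a else if j = b then w b else 0 with hv
  set ε : ℝ := min (|w b| / |w a|) (|w a| / |w b|) with hε
  have hwa : 0 < |w a| := abs_pos.mpr ha
  have hwb : 0 < |w b| := abs_pos.mpr hb
  have hεpos : 0 < ε := lt_min (div_pos hwb hwa) (div_pos hwa hwb)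
  have hεa : ε * |w a| ≤ |w b| := by
    have : ε ≤ |w b| / |w a| := min_le_left _ _
    calc ε * |w a| ≤ (|w b| / |w a|) * |w a| := by
          apply mul_le_mul_of_nonneg_right this hwa.le
      _ = |w b| := by field_simp
  have hεb : ε * |w b| ≤ |w a| := by
    have : ε ≤ |w a| / |w b| := min_le_right _ _
    calc ε * |w b| ≤ (|w a| / |w b|) * |w b| := by
          apply mul_le_mul_of_nonneg_right this hwb.le
      _ = |w a| := by field_simp
  -- pair-sum helper over columns
  have hpair : ∀ (f : Fin d → ℝ), (∀ j, j ≠ a → j ≠ b → f j = 0) →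
      ∑ j, f j = f a + f b := by
    intro f hf
    rw [← Finset.sum_subset (Finset.subset_univ ({a, b} : Finset (Fin d)))
      (fun j _ hj => by
        simp only [Finset.mem_insert, Finset.mem_singleton] at hj
        push_neg at hj
        exact hf j hj.1 hj.2)]
    rw [Finset.sum_pair hab]
  -- compute x, v values
  have hxa : x a = w b := by simp [hx]
  have hxb : x b = -(w a) := by simp [hx, Ne.symm hab]
  have hva : v a = w a := by simp [hv]
  have hvb : v b = w b := by simp [hv, Ne.symm hab]
  have hx0 : ∀ j, j ≠ a → j ≠ b → x j = 0 := fun j h1 h2 => by simp [hx, h1, h2]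
  have hv0 : ∀ j, j ≠ a → j ≠ b → v j = 0 := fun j h1 h2 => by simp [hv, h1, h2]
  -- dot products with row i₀
  have hdwx : dot w x = 0 := by
    unfold dot
    rw [hpair _ (fun j h1 h2 => by rw [hx0 j h1 h2, mul_zero])]
    rw [hxa, hxb]; ring
  have hdwv : dot w v = w a * w a + w b * w b := by
    unfold dot
    rw [hpair _ (fun j h1 h2 => by rw [hv0 j h1 h2, mul_zero])]
    rw [hva, hvb]
  have hdwv_pos : 0 < dot w v := by
    rw [hdwv]
    have h1 : 0 < w a * w a := mul_self_pos.mpr ha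
    have h2 : 0 < w b * w b := mul_self_pos.mpr hb
    linarith
  -- the A-B computation
  have hA : ∑ j, (|x j + ε * v j| + |x j - ε * v j| - 2 * |x j|) = 0 := by
    apply Finset.sum_eq_zero
    intro j _
    by_cases hja : j = a
    · subst hja
      rw [hxa, hva, abs_pair_eq _ _ (by rw [abs_mul, abs_of_pos hεpos]; exact hεa)]
      ring
    · by_cases hjb : j = b
      · subst hjb
        rw [hxb, hvb, abs_pair_eq _ _ (by
          rw [abs_mul, abs_of_pos hεpos, abs_neg]; exact hεb)]
        ring
      · rw [hx0 j hja hjb, hv0 j hja hjb]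
        simp
  have hB : ∑ i, (|dot (W i) x + ε * dot (W i) v| + |dot (W i) x - ε * dot (W i) v|
      - 2 * |dot (W i) x|) = ∑ j, (|x j + ε * v j| + |x j - ε * v j| - 2 * |x j|) := by
    have e1 := abs_identity h (x + ε • v)
    have e2 := abs_identity h (x - ε • v)
    have e3 := abs_identity h x
    simp only [dot_add_smul, dot_sub_smul, Pi.add_apply, Pi.sub_apply, Pi.smul_apply,
      smul_eq_mul] at e1 e2 e3
    simp only [Finset.sum_sub_distrib, Finset.sum_add_distrib, e1, e2]
    rw [← Finset.mul_sum, ← Finset.mul_sum, e3]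
  rw [hA] at hB
  -- but term i₀ is positive
  have hterm : 2 * ε * |dot w v| ≤ ∑ i, (|dot (W i) x + ε * dot (W i) v|
      + |dot (W i) x - ε * dot (W i) v| - 2 * |dot (W i) x|) := by
    have hone : (|dot (W i₀) x + ε * dot (W i₀) v| + |dot (W i₀) x - ε * dot (W i₀) v|
        - 2 * |dot (W i₀) x|) = 2 * ε * |dot w v| := by
      rw [← hw, hdwx]
      simp only [zero_add, zero_sub, abs_neg, abs_zero, mul_zero, sub_zero]
      rw [abs_mul, abs_of_pos hεpos]; ring
    rw [← hone]
    apply Finset.single_le_sum (f := fun i => |dot (W i) x + ε * dot (W i) v|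
      + |dot (W i) x - ε * dot (W i) v| - 2 * |dot (W i) x|)
      (fun i _ => by
        have h1 := abs_pair_ge (dot (W i) x) (ε * dot (W i) v)
        have h2 := abs_nonneg (dot (W i) x)
        linarith)
      (Finset.mem_univ i₀)
  rw [hB] at hterm
  have : 0 < 2 * ε * |dot w v| := by positivity
  linarith

end PointwiseToGood

lemma good_of_pointwise {k d : ℕ} {W : Fin k → Fin d → ℝ}
    (h : ∀ x, (∑ i, relu (dot (W i) x)) = ∑ j, relu (x j)) : Good k d W :=
  ⟨entries_nonneg h, single_support h, col_sum_one h⟩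

lemma pointwise_of_good {k d : ℕ} {W : Fin k → Fin d → ℝ} (hW : Good k d W) :
    ∀ x, (∑ i, relu (dot (W i) x)) = ∑ j, relu (x j) := by
  obtain ⟨hnn, hss, hcs⟩ := hW
  intro x
  have hrow : ∀ i, relu (dot (W i) x) = ∑ j, W i j * relu (x j) := by
    intro i
    by_cases hz : ∀ j, W i j = 0
    · have : dot (W i) x = 0 := by
        unfold dot; apply Finset.sum_eq_zero; intro j _; rw [hz j, zero_mul]
      rw [this]
      simp only [relu, max_self]
      symm; apply Finset.sum_eq_zero; intro j _; rw [hz j, zero_mul]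
    · push_neg at hz
      obtain ⟨j₀, hj₀⟩ := hz
      have hd : dot (W i) x = W i j₀ * x j₀ := by
        unfold dot
        apply Finset.sum_eq_single j₀
        · intro j _ hj
          by_cases h0 : W i j = 0
          · rw [h0, zero_mul]
          · exact absurd (hss i j j₀ h0 hj₀) hj
        · simp
      rw [hd, relu_const_mul _ _ (hnn i j₀)]
      symm
      apply Finset.sum_eq_single j₀
      · intro j _ hj
        by_cases h0 : W i j = 0
        · rw [h0, zero_mul]
        · exact absurd (hss i j j₀ h0 hj₀) hj
      · simp
  simp_rw [hrow]
  rw [Finset.sum_comm]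
  apply Finset.sum_congr rfl
  intro j _
  rw [← Finset.sum_mul, hcs j, one_mul]



variable {k d : ℕ}

noncomputable def seg (W₀ W₁ : Fin k → Fin d → ℝ) (t : ℝ) : Fin k → Fin d → ℝ :=
  fun i j => (1 - t) * W₀ i j + t * W₁ i j

lemma joinedIn_of_seg {S : Set (Fin k → Fin d → ℝ)} {W₀ W₁ : Fin k → Fin d → ℝ}
    (h : ∀ t : ℝ, t ∈ Set.Icc (0:ℝ) 1 → seg W₀ W₁ t ∈ S) : JoinedIn S W₀ W₁ := by
  refine ⟨⟨⟨fun t => seg W₀ W₁ (t : ℝ), ?_⟩, ?_, ?_⟩, fun t => h t t.2⟩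
  · apply continuous_pi; intro i; apply continuous_pi; intro j
    exact ((continuous_const.sub continuous_subtype_val).mul continuous_const).add
      (continuous_subtype_val.mul continuous_const)
  · funext i j; simp [seg]
  · funext i j; simp [seg]

lemma seg_good {W₀ W₁ : Fin k → Fin d → ℝ} (h0 : Good k d W₀) (h1 : Good k d W₁)
    (hc : ∀ i j j', (W₀ i j ≠ 0 ∨ W₁ i j ≠ 0) → (W₀ i j' ≠ 0 ∨ W₁ i j' ≠ 0) → j = j')
    {t : ℝ} (ht : t ∈ Set.Icc (0:ℝ) 1) : Good k d (seg W₀ W₁ t) := by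
  obtain ⟨ht0, ht1⟩ := ht
  refine ⟨fun i j => ?_, fun i j j' hj hj' => ?_, fun j => ?_⟩
  · have h1t : 0 ≤ 1 - t := by linarith
    exact add_nonneg (mul_nonneg h1t (h0.1 i j)) (mul_nonneg ht0 (h1.1 i j))
  · apply hc i j j'
    · by_contra hcon
      push_neg at hcon
      exact hj (by simp [seg, hcon.1, hcon.2])
    · by_contra hcon
      push_neg at hcon
      exact hj' (by simp [seg, hcon.1, hcon.2])
  · unfold seg
    rw [Finset.sum_add_distrib, ← Finset.mul_sum, ← Finset.mul_sum, h0.2.2 j, h1.2.2 j]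
    ring

lemma joinedIn_good_of_compat {W₀ W₁ : Fin k → Fin d → ℝ} (h0 : Good k d W₀) (h1 : Good k d W₁)
    (hc : ∀ i j j', (W₀ i j ≠ 0 ∨ W₁ i j ≠ 0) → (W₀ i j' ≠ 0 ∨ W₁ i j' ≠ 0) → j = j') :
    JoinedIn {W | Good k d W} W₀ W₁ :=
  joinedIn_of_seg fun _ ht => seg_good h0 h1 hc ht

noncomputable def rowMat (ρ : Fin d → Fin k) : Fin k → Fin d → ℝ :=
  fun i j => if ρ j = i then 1 else 0

lemma rowMat_ne_zero {ρ : Fin d → Fin k} {i : Fin k} {j : Fin d}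
    (h : rowMat ρ i j ≠ 0) : ρ j = i := by
  by_contra hc
  exact h (by simp [rowMat, hc])

lemma good_rowMat {ρ : Fin d → Fin k} (hρ : Function.Injective ρ) : Good k d (rowMat ρ) := by
  refine ⟨fun i j => ?_, fun i j j' hj hj' => ?_, fun j => ?_⟩
  · unfold rowMat; split <;> norm_num
  · exact hρ ((rowMat_ne_zero hj).trans (rowMat_ne_zero hj').symm)
  · simp [rowMat]

lemma update_injective {ρ : Fin d → Fin k} (hρ : Function.Injective ρ) {b : Fin k}
    (hb : ∀ j, ρ j ≠ b) (j₀ : Fin d) : Function.Injective (Function.update ρ j₀ b) := by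
  intro j j' hjj'
  by_cases h1 : j = j₀ <;> by_cases h2 : j' = j₀
  · rw [h1, h2]
  · subst h1; rw [Function.update_self, Function.update_of_ne h2] at hjj'
    exact absurd hjj'.symm (hb j')
  · subst h2; rw [Function.update_self, Function.update_of_ne h1] at hjj'
    exact absurd hjj' (hb j)
  · rw [Function.update_of_ne h1, Function.update_of_ne h2] at hjj'
    exact hρ hjj'

lemma move (hdk : d < k) {ρ : Fin d → Fin k} (hρ : Function.Injective ρ) {b : Fin k}
    (hb : ∀ j, ρ j ≠ b) (j₀ : Fin d) :
    JoinedIn {W | Good k d W} (rowMat ρ) (rowMat (Function.update ρ j₀ b)) := by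
  apply joinedIn_good_of_compat (good_rowMat hρ) (good_rowMat (update_injective hρ hb j₀))
  intro i j j' hj hj'
  have key : ∀ jj : Fin d, (rowMat ρ i jj ≠ 0 ∨ rowMat (Function.update ρ j₀ b) i jj ≠ 0) →
      ρ jj = i ∨ (jj = j₀ ∧ b = i) := by
    intro jj hjj
    rcases hjj with hjj | hjj
    · exact Or.inl (rowMat_ne_zero hjj)
    · have h2 := rowMat_ne_zero hjj
      by_cases hc : jj = j₀
      · rw [hc, Function.update_self] at h2; exact Or.inr ⟨hc, h2⟩
      · rw [Function.update_of_ne hc] at h2; exact Or.inl h2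
  rcases key j hj with h | ⟨h, hbi⟩ <;> rcases key j' hj' with h' | ⟨h', hbi'⟩
  · exact hρ (h.trans h'.symm)
  · exact absurd (h.trans hbi'.symm) (hb j)
  · exact absurd (h'.trans hbi.symm) (hb j')
  · rw [h, h']

lemma exists_spare (hdk : d < k) (ρ : Fin d → Fin k) : ∃ b, ∀ j, ρ j ≠ b := by
  by_contra hcon
  push_neg at hcon
  have hsurj : Function.Surjective ρ := fun b => hcon b
  have := Fintype.card_le_of_surjective ρ hsurj
  simp [Fintype.card_fin] at this
  omega

lemma phase2 (hdk : d < k) (ι : Fin d → Fin k) (hι : Function.Injective ι) :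
    ∀ n (ρ : Fin d → Fin k), Function.Injective ρ →
      (Finset.univ.filter (fun j => ρ j ≠ ι j)).card ≤ n →
      JoinedIn {W | Good k d W} (rowMat ρ) (rowMat ι) := by
  intro n
  induction n with
  | zero =>
    intro ρ hρ hcard
    have hempty : (Finset.univ.filter (fun j => ρ j ≠ ι j)) = ∅ :=
      Finset.card_eq_zero.mp (Nat.le_zero.mp hcard)
    have : ρ = ι := by
      funext j
      by_contra hj
      have : j ∈ Finset.univ.filter (fun j => ρ j ≠ ι j) :=
        Finset.mem_filter.mpr ⟨Finset.mem_univ j, hj⟩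
      rw [hempty] at this
      exact absurd this (Finset.notMem_empty j)
    rw [this]
    exact JoinedIn.refl (good_rowMat hι)
  | succ n ih =>
    intro ρ hρ hcard
    by_cases hall : ∀ j, ρ j = ι j
    · rw [funext hall]
      exact JoinedIn.refl (good_rowMat hι)
    push_neg at hall
    obtain ⟨j₀, hj₀⟩ := hall
    have hj₀mem : j₀ ∈ Finset.univ.filter (fun j => ρ j ≠ ι j) :=
      Finset.mem_filter.mpr ⟨Finset.mem_univ j₀, hj₀⟩
    by_cases hbr : ∀ j, ρ j ≠ ι j₀
    · -- direct move
      set ρ₁ := Function.update ρ j₀ (ι j₀) with hρ₁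
      have hmove := move hdk hρ hbr j₀
      have hρ₁inj : Function.Injective ρ₁ := update_injective hρ hbr j₀
      have hsub : (Finset.univ.filter (fun j => ρ₁ j ≠ ι j)) ⊆
          (Finset.univ.filter (fun j => ρ j ≠ ι j)).erase j₀ := by
        intro j hj
        rw [Finset.mem_filter] at hj
        have hne : j ≠ j₀ := by
          intro hc; subst hc
          exact hj.2 (Function.update_self j (ι j) ρ) -- ρ₁ j = ι j
        refine Finset.mem_erase.mpr ⟨hne, Finset.mem_filter.mpr ⟨Finset.mem_univ j, ?_⟩⟩
        rw [hρ₁, Function.update_of_ne hne] at hj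
        exact hj.2
      have hcard1 : (Finset.univ.filter (fun j => ρ₁ j ≠ ι j)).card ≤ n := by
        have h1 := Finset.card_le_card hsub
        have h2 := Finset.card_erase_of_mem hj₀mem
        omega
      exact hmove.trans (ih ρ₁ hρ₁inj hcard1)
    · push_neg at hbr
      obtain ⟨j₁, hj₁⟩ := hbr
      have hj₁ne : j₁ ≠ j₀ := by
        intro hc; subst hc; exact hj₀ hj₁
      obtain ⟨s, hs⟩ := exists_spare hdk ρ
      set ρ₂ := Function.update ρ j₁ s with hρ₂
      have hmove1 := move hdk hρ hs j₁
      have hρ₂inj : Function.Injective ρ₂ := update_injective hρ hs j₁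
      have hb2 : ∀ j, ρ₂ j ≠ ι j₀ := by
        intro j
        by_cases hc : j = j₁
        · rw [hρ₂, hc, Function.update_self]
          intro hcc
          exact hs j₁ (hj₁.trans hcc.symm)
        · rw [hρ₂, Function.update_of_ne hc]
          intro hcc
          exact hc (hρ (hcc.trans hj₁.symm))
      set ρ₃ := Function.update ρ₂ j₀ (ι j₀) with hρ₃
      have hmove2 := move hdk hρ₂inj hb2 j₀
      have hρ₃inj : Function.Injective ρ₃ := update_injective hρ₂inj hb2 j₀
      have hsub : (Finset.univ.filter (fun j => ρ₃ j ≠ ι j)) ⊆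
          (Finset.univ.filter (fun j => ρ j ≠ ι j)).erase j₀ := by
        intro j hj
        rw [Finset.mem_filter] at hj
        have hne : j ≠ j₀ := by
          intro hc; subst hc
          exact hj.2 (Function.update_self j (ι j) ρ₂)
        refine Finset.mem_erase.mpr ⟨hne, Finset.mem_filter.mpr ⟨Finset.mem_univ j, ?_⟩⟩
        by_cases hc : j = j₁
        · rw [hc, hj₁]
          intro hcc
          exact hj₁ne (hι hcc).symm
        · rw [hρ₃, Function.update_of_ne hne, hρ₂, Function.update_of_ne hc] at hj
          exact hj.2
      have hcard1 : (Finset.univ.filter (fun j => ρ₃ j ≠ ι j)).card ≤ n := by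
        have h1 := Finset.card_le_card hsub
        have h2 := Finset.card_erase_of_mem hj₀mem
        omega
      exact (hmove1.trans hmove2).trans (ih ρ₃ hρ₃inj hcard1)

lemma phase1 {W : Fin k → Fin d → ℝ} (hW : Good k d W) :
    ∃ ρ : Fin d → Fin k, Function.Injective ρ ∧
      JoinedIn {W' | Good k d W'} W (rowMat ρ) := by
  have hex : ∀ j : Fin d, ∃ i, W i j ≠ 0 := by
    intro j
    by_contra hcon
    push_neg at hcon
    have : ∑ i, W i j = 0 := Finset.sum_eq_zero fun i _ => hcon i
    rw [hW.2.2 j] at this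
    norm_num at this
  choose ρ hρ using hex
  have hρinj : Function.Injective ρ := fun j j' hjj' =>
    hW.2.1 (ρ j) j j' (hρ j) (by rw [hjj']; exact hρ j')
  refine ⟨ρ, hρinj, ?_⟩
  apply joinedIn_good_of_compat hW (good_rowMat hρinj)
  intro i j j' hj hj'
  have key : ∀ jj : Fin d, (W i jj ≠ 0 ∨ rowMat ρ i jj ≠ 0) → W i jj ≠ 0 := by
    intro jj hjj
    rcases hjj with hjj | hjj
    · exact hjj
    · have := rowMat_ne_zero hjj
      rw [← this]
      exact hρ jj
  exact hW.2.1 i j j' (key j hj) (key j' hj')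

theorem good_pathConnected (hd : 1 ≤ d) (hdk : d < k) :
    IsPathConnected {W : Fin k → Fin d → ℝ | Good k d W} := by
  set ι : Fin d → Fin k := fun j => Fin.castLE (le_of_lt hdk) j with hι
  have hιinj : Function.Injective ι := fun j j' h => by
    rwa [hι, Fin.castLE_inj] at h
  refine ⟨rowMat ι, good_rowMat hιinj, ?_⟩
  intro W hW
  obtain ⟨ρ, hρinj, hjoin⟩ := phase1 hW
  exact (hjoin.trans (phase2 hdk ι hιinj _ ρ hρinj le_rfl)).symm

lemma loss_zero_iff_good {k d : ℕ} (W : Fin k → Fin d → ℝ) :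
    loss k d W = 0 ↔ Good k d W := by
  rw [loss_eq_zero_iff]
  exact ⟨good_of_pointwise, pointwise_of_good⟩

end Aux

/-- In the over-parameterized case `k > d`, the set of global minimizers
`{ W : L(W) = 0 }` is path-connected. -/
theorem stmt7 (k d : ℕ) (hd : 1 ≤ d) (hkd : d < k) :
    IsPathConnected {W : Fin k → Fin d → ℝ | loss k d W = 0} := by
  have hset : {W : Fin k → Fin d → ℝ | loss k d W = 0} = {W | Good k d W} := by
    ext W
    exact loss_zero_iff_good W
  rw [hset]
  exact good_pathConnected hd hkd
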